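/- arXiv:2105.05842 — 9 statements merged into one kernel-verified Lean document; each statement's English description precedes it below -/
import Mathlib

section
/- Let d ≥ 1 and let k_rt : ℝᵈ × ℝᵈ → ℝ be measurable with sup_x ∫_{ℝᵈ} k_rt(x,z)² dz < ∞, and define k(x,y) := ∫_{ℝᵈ} k_rt(x,z) k_rt(y,z) dz with ‖k‖_∞ := sup_{x,y} |k(x,y)| < ∞. Let P and Q be Borel probability measures on ℝᵈ such that x ↦ k_rt(x,z) is P-integrable and Q-integrable for every z, and let R ≥ 0 and a, b ≥ 0 with a + b = 1. Then (∫_{ℝᵈ} (Pk_rt(z) − Qk_rt(z))² dz)^{1/2} ≤ v_d · R^{d/2} · sup_{z∈ℝᵈ} |Pk_rt(z) − Qk_rt(z)| + 2 τ_{k_rt}(aR) + 2 ‖k‖_∞^{1/2} · max(τ_P(bR), τ_Q(bR)), where v_d := (π^{d/2}/Γ(d/2+1))^{1/2}. -/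
/-!
Write `g = Pk_rt - Qk_rt` and split `ℝᵈ` at radius `R`. On the ball, `|g| ≤ S` gives
`‖g‖_{L²(B_R)} ≤ S · vol(B_R)^{1/2} = v_d R^{d/2} S`. Off the ball, split each of `P`, `Q` at
radius `bR`. A source point `x` with `‖x‖ < bR` is at distance at least `aR` from every `z` with
`‖z‖ ≥ R`, so `‖k_rt(x, ·)‖_{L²(‖z‖ ≥ R)} ≤ τ_{k_rt}(aR)`; for any other `x` we only have
`‖k_rt(x, ·)‖_{L²}² = k(x, x) ≤ ‖k‖_∞`. Minkowski's integral inequality turns these bounds, uniform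
in `x`, into bounds on the two parts of each mean embedding, weighted by their masses `≤ 1` and
`τ_P(bR)` respectively.
-/

open MeasureTheory

/-- The mean embedding of a probability measure `P` under the kernel `h`:
`Ph(z) = ∫ h(x,z) dP(x)`. -/
noncomputable def meanEmbed {d : ℕ}
    (P : Measure (EuclideanSpace ℝ (Fin d)))
    (h : EuclideanSpace ℝ (Fin d) → EuclideanSpace ℝ (Fin d) → ℝ)
    (z : EuclideanSpace ℝ (Fin d)) : ℝ :=
  ∫ x, h x z ∂P

/-- The kernel tail `τ_h(R) = sup_x (∫_{‖y‖ ≥ R} h(x, x−y)² dy)^{1/2}`. -/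
noncomputable def kernelTail {d : ℕ}
    (h : EuclideanSpace ℝ (Fin d) → EuclideanSpace ℝ (Fin d) → ℝ) (R : ℝ) : ℝ :=
  ⨆ x, Real.sqrt (∫ y in {y : EuclideanSpace ℝ (Fin d) | R ≤ ‖y‖}, (h x (x - y)) ^ 2)

/-- The measure tail `τ_P(R) = P({x : ‖x‖ ≥ R})`. -/
noncomputable def measTail {d : ℕ} (P : Measure (EuclideanSpace ℝ (Fin d))) (R : ℝ) : ℝ :=
  (P {x | R ≤ ‖x‖}).toReal

open ENNReal Set Function

section L2

variable {α β E : Type*} [MeasurableSpace α] [MeasurableSpace β]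
  [NormedAddCommGroup E] {μ : Measure α} {ν : Measure β}

lemma eLpNorm_two_sq (f : α → E) : eLpNorm f 2 μ ^ 2 = ∫⁻ x, ‖f x‖ₑ ^ 2 ∂μ := by
  simpa using eLpNorm_nnreal_pow_eq_lintegral (μ := μ) (f := f) (p := 2) two_ne_zero

lemma sqrt_integral_sq_eq_toReal_eLpNorm {f : α → ℝ} (hf : AEStronglyMeasurable f μ) :
    √(∫ x, f x ^ 2 ∂μ) = (eLpNorm f 2 μ).toReal := by
  have hsq : ∀ x, ENNReal.ofReal (f x ^ 2) = ‖f x‖ₑ ^ 2 := fun x => by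
    rw [Real.enorm_eq_ofReal_abs, ← ENNReal.ofReal_pow (abs_nonneg _), sq_abs]
  rw [integral_eq_lintegral_of_nonneg_ae (ae_of_all _ fun x => sq_nonneg _) (hf.pow 2)]
  simp_rw [hsq]
  rw [← eLpNorm_two_sq, ENNReal.toReal_pow, Real.sqrt_sq ENNReal.toReal_nonneg]

lemma eLpNorm_two_eq_ofReal_sqrt_integral_sq {f : α → ℝ} (hf : MemLp f 2 μ) :
    eLpNorm f 2 μ = ENNReal.ofReal √(∫ x, f x ^ 2 ∂μ) := by
  rw [sqrt_integral_sq_eq_toReal_eLpNorm hf.1, ENNReal.ofReal_toReal hf.eLpNorm_ne_top]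

lemma eLpNorm_le_eLpNorm_restrict_add_eLpNorm_restrict_compl {f : α → E} {p : ℝ≥0∞}
    (hp : 1 ≤ p) (hf : AEStronglyMeasurable f μ) {s : Set α} (hs : MeasurableSet s) :
    eLpNorm f p μ ≤ eLpNorm f p (μ.restrict s) + eLpNorm f p (μ.restrict sᶜ) := by
  calc eLpNorm f p μ = eLpNorm (s.indicator f + sᶜ.indicator f) p μ := by
        rw [indicator_self_add_compl]
    _ ≤ eLpNorm (s.indicator f) p μ + eLpNorm (sᶜ.indicator f) p μ :=
        eLpNorm_add_le (hf.indicator hs) (hf.indicator hs.compl) hp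
    _ = eLpNorm f p (μ.restrict s) + eLpNorm f p (μ.restrict sᶜ) := by
        rw [eLpNorm_indicator_eq_eLpNorm_restrict hs,
          eLpNorm_indicator_eq_eLpNorm_restrict hs.compl]

lemma sqrt_integral_sq_le_add {f : α → ℝ} (hf : AEStronglyMeasurable f μ) {s : Set α}
    (hs : MeasurableSet s) {A B : ℝ} (hA : 0 ≤ A) (hB : 0 ≤ B)
    (hAf : eLpNorm f 2 (μ.restrict sᶜ) ≤ ENNReal.ofReal A)
    (hBf : eLpNorm f 2 (μ.restrict s) ≤ ENNReal.ofReal B) :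
    √(∫ x, f x ^ 2 ∂μ) ≤ A + B := by
  rw [sqrt_integral_sq_eq_toReal_eLpNorm hf]
  refine ENNReal.toReal_le_of_le_ofReal (add_nonneg hA hB) ?_
  calc eLpNorm f 2 μ ≤ eLpNorm f 2 (μ.restrict sᶜ) + eLpNorm f 2 (μ.restrict s) := by
        rw [add_comm]
        exact eLpNorm_le_eLpNorm_restrict_add_eLpNorm_restrict_compl one_le_two hf hs
    _ ≤ ENNReal.ofReal A + ENNReal.ofReal B := add_le_add hAf hBf
    _ = ENNReal.ofReal (A + B) := (ENNReal.ofReal_add hA hB).symm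

variable [NormedSpace ℝ E]

lemma enorm_integral_sq_le {f : α → E} (hf : AEStronglyMeasurable f μ) :
    ‖∫ x, f x ∂μ‖ₑ ^ 2 ≤ μ univ * ∫⁻ x, ‖f x‖ₑ ^ 2 ∂μ := by
  have hCS : eLpNorm f 1 μ ≤ eLpNorm f 2 μ * μ univ ^ (1 / 2 : ℝ) := by
    have := eLpNorm_le_eLpNorm_mul_rpow_measure_univ (p := 1) (q := 2) one_le_two hf
    norm_num at this
    exact this
  calc ‖∫ x, f x ∂μ‖ₑ ^ 2 ≤ eLpNorm f 1 μ ^ 2 := by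
        rw [eLpNorm_one_eq_lintegral_enorm]
        gcongr
        exact enorm_integral_le_lintegral_enorm f
    _ ≤ (eLpNorm f 2 μ * μ univ ^ (1 / 2 : ℝ)) ^ 2 := by gcongr
    _ = μ univ * ∫⁻ x, ‖f x‖ₑ ^ 2 ∂μ := by
        rw [mul_pow, eLpNorm_two_sq, ← ENNReal.rpow_natCast (μ univ ^ _), ← ENNReal.rpow_mul]
        norm_num
        ring

/-- A uniform version of Minkowski's integral inequality in `L²`: Cauchy–Schwarz in `x`, then
Tonelli. -/
lemma eLpNorm_two_integral_le [SFinite μ] [SFinite ν] {f : α → β → E}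
    (hf : StronglyMeasurable (uncurry f)) {C : ℝ≥0∞} (hC : ∀ᵐ x ∂μ, eLpNorm (f x) 2 ν ≤ C) :
    eLpNorm (fun y => ∫ x, f x y ∂μ) 2 ν ≤ μ univ * C := by
  have hsq : Measurable (uncurry fun x y => ‖f x y‖ₑ ^ 2) := hf.enorm.pow_const 2
  rw [← ENNReal.pow_le_pow_left_iff two_ne_zero, eLpNorm_two_sq]
  calc ∫⁻ y, ‖∫ x, f x y ∂μ‖ₑ ^ 2 ∂ν
      ≤ ∫⁻ y, μ univ * ∫⁻ x, ‖f x y‖ₑ ^ 2 ∂μ ∂ν := by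
        refine lintegral_mono fun y => enorm_integral_sq_le ?_
        exact (hf.comp_measurable measurable_prodMk_right).aestronglyMeasurable
    _ = μ univ * ∫⁻ x, eLpNorm (f x) 2 ν ^ 2 ∂μ := by
        simp_rw [eLpNorm_two_sq]
        rw [lintegral_const_mul (f := fun y => ∫⁻ x, ‖f x y‖ₑ ^ 2 ∂μ) _
          hsq.lintegral_prod_left', lintegral_lintegral_swap hsq.aemeasurable]
    _ ≤ μ univ * ∫⁻ _, C ^ 2 ∂μ :=
        mul_le_mul_right (lintegral_mono_ae (hC.mono fun x hx => by gcongr)) _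
    _ = (μ univ * C) ^ 2 := by rw [lintegral_const]; ring

end L2

section Ball

open Real

variable {ι E : Type*} [Fintype ι] [Nonempty ι] [NormedAddCommGroup E]

lemma EuclideanSpace.volume_ball_rpow_inv_two (x : EuclideanSpace ℝ ι) {R : ℝ} (hR : 0 ≤ R) :
    volume (Metric.ball x R) ^ (2⁻¹ : ℝ)
      = ENNReal.ofReal (√(π ^ ((Fintype.card ι : ℝ) / 2) / Gamma ((Fintype.card ι : ℝ) / 2 + 1))
          * R ^ ((Fintype.card ι : ℝ) / 2)) := by
  set n := Fintype.card ι
  have hΓ : 0 < Gamma ((n : ℝ) / 2 + 1) := Gamma_pos_of_pos (by positivity)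
  have hhalf : ∀ {y : ℝ}, 0 ≤ y → (y ^ ((n : ℝ) / 2)) ^ 2 = y ^ n := fun hy => by
    rw [← Real.rpow_natCast, ← rpow_mul hy, ← Real.rpow_natCast]
    congr 1
    push_cast
    ring
  have hpi : √π ^ n = π ^ ((n : ℝ) / 2) := by
    rw [sqrt_eq_rpow, ← Real.rpow_natCast, ← rpow_mul pi_pos.le]
    congr 1
    ring
  have hvol : R ^ n * (√π ^ n / Gamma ((n : ℝ) / 2 + 1))
      = (√(π ^ ((n : ℝ) / 2) / Gamma ((n : ℝ) / 2 + 1)) * R ^ ((n : ℝ) / 2)) ^ 2 := by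
    rw [mul_pow, sq_sqrt (div_nonneg (rpow_nonneg pi_pos.le _) hΓ.le), hhalf hR, hpi]
    ring
  rw [EuclideanSpace.volume_ball, ← ENNReal.ofReal_pow hR,
    ← ENNReal.ofReal_mul (pow_nonneg hR n), hvol, ENNReal.ofReal_pow (by positivity),
    ← ENNReal.rpow_natCast, ← ENNReal.rpow_mul]
  norm_num

lemma eLpNorm_restrict_ball_le (x : EuclideanSpace ℝ ι) {R S : ℝ} (hR : 0 ≤ R)
    {f : EuclideanSpace ℝ ι → E} (hS : ∀ z, ‖f z‖ ≤ S) :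
    eLpNorm f 2 (volume.restrict (Metric.ball x R))
      ≤ ENNReal.ofReal (√(π ^ ((Fintype.card ι : ℝ) / 2) / Gamma ((Fintype.card ι : ℝ) / 2 + 1))
          * R ^ ((Fintype.card ι : ℝ) / 2) * S) := by
  have hS0 : 0 ≤ S := (norm_nonneg _).trans (hS x)
  refine (eLpNorm_le_of_ae_bound (ae_of_all _ hS)).trans_eq ?_
  rw [Measure.restrict_apply_univ, ENNReal.toReal_ofNat,
    EuclideanSpace.volume_ball_rpow_inv_two x hR, ← ENNReal.ofReal_mul (by positivity)]

end Ball

section KernelTail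

variable {d : ℕ} {h : EuclideanSpace ℝ (Fin d) → EuclideanSpace ℝ (Fin d) → ℝ}

lemma measTail_nonneg (μ : Measure (EuclideanSpace ℝ (Fin d))) (s : ℝ) : 0 ≤ measTail μ s :=
  ENNReal.toReal_nonneg

lemma kernelTail_nonneg (h : EuclideanSpace ℝ (Fin d) → EuclideanSpace ℝ (Fin d) → ℝ) (r : ℝ) :
    0 ≤ kernelTail h r :=
  Real.iSup_nonneg fun _ => Real.sqrt_nonneg _

lemma setIntegral_comp_sub_left_norm_ge (x : EuclideanSpace ℝ (Fin d))
    (f : EuclideanSpace ℝ (Fin d) → ℝ) (r : ℝ) :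
    ∫ y in {y | r ≤ ‖y‖}, f (x - y) = ∫ z in {z | r ≤ ‖x - z‖}, f z := by
  have hpre : (x - ·) ⁻¹' {z | r ≤ ‖x - z‖} = {y | r ≤ ‖y‖} := by
    ext y
    simp
  rw [← hpre]
  exact (volume.measurePreserving_sub_left x).setIntegral_preimage_emb
    (MeasurableEquiv.subLeft x).measurableEmbedding f _

variable {C : ℝ} (hsq : ∀ x, Integrable (fun z => h x z ^ 2)) (hC : ∀ x, ∫ z, h x z ^ 2 ≤ C)
include hsq hC

lemma sqrt_setIntegral_sq_le_kernelTail (x : EuclideanSpace ℝ (Fin d)) (r : ℝ) :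
    √(∫ y in {y | r ≤ ‖y‖}, h x (x - y) ^ 2) ≤ kernelTail h r := by
  refine le_ciSup (f := fun x => √(∫ y in {y | r ≤ ‖y‖}, h x (x - y) ^ 2)) ⟨√C, ?_⟩ x
  rintro _ ⟨x, rfl⟩
  refine Real.sqrt_le_sqrt (le_trans ?_ (hC x))
  calc ∫ y in {y | r ≤ ‖y‖}, h x (x - y) ^ 2 ≤ ∫ y, h x (x - y) ^ 2 :=
        setIntegral_le_integral ((hsq x).comp_sub_left x) (ae_of_all _ fun _ => sq_nonneg _)
    _ = ∫ z, h x z ^ 2 := integral_sub_left_eq_self (fun z => h x z ^ 2) volume x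

lemma eLpNorm_restrict_norm_ge_le_kernelTail (hmeas : Measurable (uncurry h))
    {r R : ℝ} {x : EuclideanSpace ℝ (Fin d)} (hx : r + ‖x‖ ≤ R) :
    eLpNorm (h x) 2 (volume.restrict {z | R ≤ ‖z‖}) ≤ ENNReal.ofReal (kernelTail h r) := by
  have hmem : MemLp (h x) 2 :=
    (memLp_two_iff_integrable_sq hmeas.of_uncurry_left.aestronglyMeasurable).2 (hsq x)
  have hfar : {z | R ≤ ‖z‖} ⊆ {z | r ≤ ‖x - z‖} := fun z (hz : R ≤ ‖z‖) =>
    show r ≤ ‖x - z‖ by linarith [norm_sub_norm_le z x, norm_sub_rev x z]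
  rw [eLpNorm_two_eq_ofReal_sqrt_integral_sq (hmem.restrict _)]
  refine ENNReal.ofReal_le_ofReal ?_
  calc √(∫ z in {z | R ≤ ‖z‖}, h x z ^ 2) ≤ √(∫ z in {z | r ≤ ‖x - z‖}, h x z ^ 2) :=
        Real.sqrt_le_sqrt <| setIntegral_mono_set (hsq x).integrableOn
          (ae_of_all _ fun _ => sq_nonneg _) hfar.eventuallyLE
    _ = √(∫ y in {y | r ≤ ‖y‖}, h x (x - y) ^ 2) := by
        rw [setIntegral_comp_sub_left_norm_ge x (fun z => h x z ^ 2)]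
    _ ≤ kernelTail h r := sqrt_setIntegral_sq_le_kernelTail hsq hC x r

lemma eLpNorm_restrict_le_ofReal_sqrt (hmeas : Measurable (uncurry h)) (x : EuclideanSpace ℝ (Fin d))
    (s : Set (EuclideanSpace ℝ (Fin d))) :
    eLpNorm (h x) 2 (volume.restrict s) ≤ ENNReal.ofReal √C := by
  have hmem : MemLp (h x) 2 :=
    (memLp_two_iff_integrable_sq hmeas.of_uncurry_left.aestronglyMeasurable).2 (hsq x)
  refine (eLpNorm_restrict_le _ _ _ _).trans ?_
  rw [eLpNorm_two_eq_ofReal_sqrt_integral_sq hmem]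
  exact ENNReal.ofReal_le_ofReal (Real.sqrt_le_sqrt (hC x))

lemma eLpNorm_meanEmbed_restrict_norm_ge_le (hmeas : Measurable (uncurry h))
    (μ : Measure (EuclideanSpace ℝ (Fin d))) [IsProbabilityMeasure μ]
    (hint : ∀ z, Integrable (fun x => h x z) μ) {r s R : ℝ} (hrs : r + s ≤ R) :
    eLpNorm (meanEmbed μ h) 2 (volume.restrict {z | R ≤ ‖z‖})
      ≤ ENNReal.ofReal (kernelTail h r + √C * measTail μ s) := by
  set B : Set (EuclideanSpace ℝ (Fin d)) := {x | s ≤ ‖x‖}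
  have hB : MeasurableSet B := measurableSet_le measurable_const measurable_norm
  have hsplit : meanEmbed μ h
      = (fun z => ∫ x in Bᶜ, h x z ∂μ) + fun z => ∫ x in B, h x z ∂μ := by
    funext z
    rw [Pi.add_apply, add_comm]
    exact (integral_add_compl hB (hint z)).symm
  have hnear : eLpNorm (fun z => ∫ x in Bᶜ, h x z ∂μ) 2 (volume.restrict {z | R ≤ ‖z‖})
      ≤ ENNReal.ofReal (kernelTail h r) := by
    refine (eLpNorm_two_integral_le hmeas.stronglyMeasurable ((ae_restrict_iff' hB.compl).2
      (ae_of_all _ fun x (hx : ¬ s ≤ ‖x‖) => eLpNorm_restrict_norm_ge_le_kernelTail hsq hC hmeas (r := r)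
        (by linarith [not_le.1 hx])))).trans ?_
    rw [Measure.restrict_apply_univ]
    exact mul_le_of_le_one_left' prob_le_one
  have hfar : eLpNorm (fun z => ∫ x in B, h x z ∂μ) 2 (volume.restrict {z | R ≤ ‖z‖})
      ≤ ENNReal.ofReal (√C * measTail μ s) := by
    refine (eLpNorm_two_integral_le hmeas.stronglyMeasurable
      (ae_of_all _ fun x => eLpNorm_restrict_le_ofReal_sqrt hsq hC hmeas x _)).trans_eq ?_
    rw [Measure.restrict_apply_univ, measTail, ENNReal.ofReal_mul (Real.sqrt_nonneg _),
      ENNReal.ofReal_toReal (measure_ne_top _ _), mul_comm]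
  rw [hsplit, ENNReal.ofReal_add (kernelTail_nonneg h r)
    (mul_nonneg (Real.sqrt_nonneg C) (measTail_nonneg μ s))]
  exact (eLpNorm_add_le (hmeas.stronglyMeasurable.integral_prod_left).aestronglyMeasurable
    (hmeas.stronglyMeasurable.integral_prod_left).aestronglyMeasurable one_le_two).trans
      (add_le_add hnear hfar)

lemma eLpNorm_meanEmbed_sub_restrict_norm_ge_le (hmeas : Measurable (uncurry h))
    (P Q : Measure (EuclideanSpace ℝ (Fin d))) [IsProbabilityMeasure P] [IsProbabilityMeasure Q]
    (hPint : ∀ z, Integrable (fun x => h x z) P) (hQint : ∀ z, Integrable (fun x => h x z) Q)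
    {r s R : ℝ} (hrs : r + s ≤ R) :
    eLpNorm (meanEmbed P h - meanEmbed Q h) 2 (volume.restrict {z | R ≤ ‖z‖})
      ≤ ENNReal.ofReal (2 * kernelTail h r + 2 * √C * max (measTail P s) (measTail Q s)) := by
  have hτ := kernelTail_nonneg h r
  have hmP := measTail_nonneg P s
  have hmQ := measTail_nonneg Q s
  have hsqrtC := Real.sqrt_nonneg C
  calc eLpNorm (meanEmbed P h - meanEmbed Q h) 2 (volume.restrict {z | R ≤ ‖z‖})
      ≤ eLpNorm (meanEmbed P h) 2 (volume.restrict {z | R ≤ ‖z‖})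
        + eLpNorm (meanEmbed Q h) 2 (volume.restrict {z | R ≤ ‖z‖}) :=
        eLpNorm_sub_le hmeas.stronglyMeasurable.integral_prod_left.aestronglyMeasurable
          hmeas.stronglyMeasurable.integral_prod_left.aestronglyMeasurable one_le_two
    _ ≤ ENNReal.ofReal (kernelTail h r + √C * measTail P s)
        + ENNReal.ofReal (kernelTail h r + √C * measTail Q s) :=
        add_le_add (eLpNorm_meanEmbed_restrict_norm_ge_le hsq hC hmeas P hPint hrs)
          (eLpNorm_meanEmbed_restrict_norm_ge_le hsq hC hmeas Q hQint hrs)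
    _ ≤ ENNReal.ofReal (2 * kernelTail h r + 2 * √C * max (measTail P s) (measTail Q s)) := by
        rw [← ENNReal.ofReal_add (by positivity) (by positivity)]
        refine ENNReal.ofReal_le_ofReal ?_
        nlinarith [le_max_left (measTail P s) (measTail Q s),
          le_max_right (measTail P s) (measTail Q s)]

end KernelTail

theorem linf_coreset_to_mmd_coreset_general {d : ℕ} (hd : 1 ≤ d)
    (krt : EuclideanSpace ℝ (Fin d) → EuclideanSpace ℝ (Fin d) → ℝ)
    (hmeas : Measurable (Function.uncurry krt))
    (hsqint : ∀ x, Integrable (fun z => (krt x z) ^ 2))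
    (k : EuclideanSpace ℝ (Fin d) → EuclideanSpace ℝ (Fin d) → ℝ)
    (hk : ∀ x y, k x y = ∫ z, krt x z * krt y z)
    (Kinf : ℝ) (hKinf : ∀ x y, |k x y| ≤ Kinf)
    (P Q : Measure (EuclideanSpace ℝ (Fin d)))
    [IsProbabilityMeasure P] [IsProbabilityMeasure Q]
    (hPint : ∀ z, Integrable (fun x => krt x z) P)
    (hQint : ∀ z, Integrable (fun x => krt x z) Q)
    (R a b : ℝ) (hR : 0 ≤ R) (hab : a + b = 1)
    (S : ℝ) (hS : ∀ z, |meanEmbed P krt z - meanEmbed Q krt z| ≤ S) :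
    Real.sqrt (∫ z, (meanEmbed P krt z - meanEmbed Q krt z) ^ 2)
      ≤ Real.sqrt (Real.pi ^ ((d : ℝ) / 2) / Real.Gamma ((d : ℝ) / 2 + 1))
          * R ^ ((d : ℝ) / 2) * S
        + 2 * kernelTail krt (a * R)
        + 2 * Real.sqrt Kinf * max (measTail P (b * R)) (measTail Q (b * R)) := by
  have : Nonempty (Fin d) := ⟨⟨0, hd⟩⟩
  have hdiag : ∀ x, ∫ z, krt x z ^ 2 ≤ Kinf := fun x => by
    simpa only [sq, ← hk] using (le_abs_self _).trans (hKinf x x)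
  have hball : {z : EuclideanSpace ℝ (Fin d) | R ≤ ‖z‖}ᶜ = Metric.ball 0 R := by
    ext z
    simp
  have hnear := eLpNorm_restrict_ball_le (f := meanEmbed P krt - meanEmbed Q krt) 0 hR
    fun z => (Real.norm_eq_abs _).trans_le (hS z)
  rw [Fintype.card_fin, ← hball] at hnear
  have hfar := eLpNorm_meanEmbed_sub_restrict_norm_ge_le hsqint hdiag hmeas P Q hPint hQint
    (r := a * R) (s := b * R) (by rw [← add_mul, hab, one_mul])
  have hτ := kernelTail_nonneg krt (a * R)
  have hmP := measTail_nonneg P (b * R)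
  have hS0 : 0 ≤ S := (abs_nonneg _).trans (hS 0)
  rw [add_assoc]
  exact sqrt_integral_sq_le_add
    (hmeas.stronglyMeasurable.integral_prod_left.sub
      hmeas.stronglyMeasurable.integral_prod_left).aestronglyMeasurable
    (measurableSet_le measurable_const measurable_norm) (by positivity) (by positivity) hnear hfar

/-- L∞ coresets for `(k_rt, P)` are MMD coresets for `(k, P)`: for
`k(x,y) = ∫ k_rt(x,z) k_rt(y,z) dz` with `|k| ≤ K∞`, any `R ≥ 0` and `a + b = 1`
with `a, b ≥ 0`, and any uniform bound `S` on `|Pk_rt − Qk_rt|`,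
`MMD_k(P,Q) = ‖Pk_rt − Qk_rt‖_{L²} ≤ v_d R^{d/2} S + 2τ_{k_rt}(aR) + 2√K∞ max(τ_P(bR), τ_Q(bR))`,
where `v_d = (π^{d/2}/Γ(d/2+1))^{1/2}`. -/
theorem linf_coreset_to_mmd_coreset {d : ℕ} (hd : 1 ≤ d)
    (krt : EuclideanSpace ℝ (Fin d) → EuclideanSpace ℝ (Fin d) → ℝ)
    (hmeas : Measurable (Function.uncurry krt))
    (hsqint : ∀ x, Integrable (fun z => (krt x z) ^ 2))
    (Csq : ℝ) (hCsq : ∀ x, (∫ z, (krt x z) ^ 2) ≤ Csq)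
    (k : EuclideanSpace ℝ (Fin d) → EuclideanSpace ℝ (Fin d) → ℝ)
    (hk : ∀ x y, k x y = ∫ z, krt x z * krt y z)
    (Kinf : ℝ) (hKinf : ∀ x y, |k x y| ≤ Kinf)
    (P Q : Measure (EuclideanSpace ℝ (Fin d)))
    [IsProbabilityMeasure P] [IsProbabilityMeasure Q]
    (hPint : ∀ z, Integrable (fun x => krt x z) P)
    (hQint : ∀ z, Integrable (fun x => krt x z) Q)
    (R a b : ℝ) (hR : 0 ≤ R) (ha : 0 ≤ a) (hb : 0 ≤ b) (hab : a + b = 1)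
    (S : ℝ) (hS : ∀ z, |meanEmbed P krt z - meanEmbed Q krt z| ≤ S) :
    Real.sqrt (∫ z, (meanEmbed P krt z - meanEmbed Q krt z) ^ 2)
      ≤ Real.sqrt (Real.pi ^ ((d : ℝ) / 2) / Real.Gamma ((d : ℝ) / 2 + 1))
          * R ^ ((d : ℝ) / 2) * S
        + 2 * kernelTail krt (a * R)
        + 2 * Real.sqrt Kinf * max (measTail P (b * R)) (measTail Q (b * R)) :=
  linf_coreset_to_mmd_coreset_general hd krt hmeas hsqint k hk Kinf hKinf P Q hPint hQint R a b hR
    hab S hS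
end

section
/- Let d ≥ 1 and let k_rt : ℝᵈ × ℝᵈ → ℝ be measurable with sup_x ∫_{ℝᵈ} k_rt(x,z)² dz < ∞, and define k(x,y) := ∫_{ℝᵈ} k_rt(x,z) k_rt(y,z) dz. Then for any Borel probability measures P and Q on ℝᵈ such that x ↦ k_rt(x,z) is P-integrable and Q-integrable for every z: ∫∫ k(x,y) dP(x) dP(y) − 2 ∫∫ k(x,y) dP(x) dQ(y) + ∫∫ k(x,y) dQ(x) dQ(y) = ∫_{ℝᵈ} (Pk_rt(z) − Qk_rt(z))² dz; in particular, the left-hand side is nonnegative. -/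
/-!
With `k(x,y) = ⟨k_rt(x,·), k_rt(y,·)⟩_{L²}`, the uniform bound on `∫ k_rt(x,z)² dz` puts `k_rt`
in `L²(μ ⊗ dz)` for every probability measure `μ`, and Jensen's inequality `(∫ g dμ)² ≤ ∫ g² dμ`
puts the mean embedding `μ k_rt` in `L²(dz)`. Fubini then moves the `μ`-integrals inside the
inner product, `∬ k dμ dμ' = ⟨μ k_rt, μ' k_rt⟩_{L²}`, so the left-hand side is
`‖P k_rt - Q k_rt‖²_{L²}`.
-/

open MeasureTheory

section MeanEmbedding

variable {X Z : Type*} [MeasurableSpace X] [MeasurableSpace Z]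
  {μ μ' : Measure X} {ν : Measure Z} {f : X → Z → ℝ}

lemma sq_integral_le_integral_sq [IsProbabilityMeasure μ] {g : X → ℝ} (hg : MemLp g 2 μ) :
    (∫ x, g x ∂μ) ^ 2 ≤ ∫ x, g x ^ 2 ∂μ := by
  have hvar := ProbabilityTheory.variance_nonneg g μ
  rw [ProbabilityTheory.variance_eq_sub hg, sub_nonneg] at hvar
  simpa only [Pi.pow_apply] using hvar

lemma memLp_two_uncurry_of_integral_sq_le [IsFiniteMeasure μ] [SFinite ν] {C : ℝ}
    (hf : AEStronglyMeasurable (Function.uncurry f) (μ.prod ν))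
    (hsq : ∀ x, Integrable (fun z => f x z ^ 2) ν) (hC : ∀ x, ∫ z, f x z ^ 2 ∂ν ≤ C) :
    MemLp (Function.uncurry f) 2 (μ.prod ν) := by
  have hf2 : AEStronglyMeasurable (fun p => Function.uncurry f p ^ 2) (μ.prod ν) := hf.pow 2
  rw [memLp_two_iff_integrable_sq hf, integrable_prod_iff hf2]
  refine ⟨ae_of_all _ hsq, (integrable_const C).mono' hf2.norm.integral_prod_right'
    (ae_of_all _ fun x => ?_)⟩
  simp only [Function.uncurry_apply_pair, norm_pow, Real.norm_eq_abs, sq_abs]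
  rw [abs_of_nonneg (integral_nonneg fun z => sq_nonneg _)]
  exact hC x

lemma memLp_two_integral_left [IsProbabilityMeasure μ] [SFinite ν]
    (hf : MemLp (Function.uncurry f) 2 (μ.prod ν)) :
    MemLp (fun z => ∫ x, f x z ∂μ) 2 ν := by
  have hmeas : AEStronglyMeasurable (fun z => ∫ x, f x z ∂μ) ν :=
    hf.aestronglyMeasurable.prod_swap.integral_prod_right'
  have hsq : Integrable (fun p : X × Z => f p.1 p.2 ^ 2) (μ.prod ν) :=
    (memLp_two_iff_integrable_sq hf.aestronglyMeasurable).1 hf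
  rw [memLp_two_iff_integrable_sq hmeas]
  refine hsq.integral_prod_right.mono' (hmeas.pow 2) ?_
  filter_upwards [hsq.prod_left_ae, hf.aestronglyMeasurable.prod_swap.prodMk_left]
    with z hz hmz
  rw [norm_pow, Real.norm_eq_abs, sq_abs]
  exact sq_integral_le_integral_sq ((memLp_two_iff_integrable_sq hmz).2 hz)

lemma integral_integral_mul_swap [IsFiniteMeasure μ] [SFinite ν]
    (hf : MemLp (Function.uncurry f) 2 (μ.prod ν)) {g : Z → ℝ} (hg : MemLp g 2 ν) :
    ∫ x, ∫ z, g z * f x z ∂ν ∂μ = ∫ z, g z * ∫ x, f x z ∂μ ∂ν := by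
  have hint : Integrable (Function.uncurry fun x z => g z * f x z) (μ.prod ν) :=
    (hg.comp_snd μ).integrable_mul hf
  rw [integral_integral_swap hint]
  simp only [integral_const_mul]

lemma integral_integral_integral_mul [IsFiniteMeasure μ] [IsProbabilityMeasure μ'] [SFinite ν]
    (hf : MemLp (Function.uncurry f) 2 (μ.prod ν))
    (hf' : MemLp (Function.uncurry f) 2 (μ'.prod ν)) (hfib : ∀ x, MemLp (f x) 2 ν) :
    ∫ x, ∫ y, (∫ z, f x z * f y z ∂ν) ∂μ' ∂μ
      = ∫ z, (∫ y, f y z ∂μ') * (∫ x, f x z ∂μ) ∂ν := by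
  have hinner : ∀ x, ∫ y, (∫ z, f x z * f y z ∂ν) ∂μ' = ∫ z, (∫ y, f y z ∂μ') * f x z ∂ν :=
    fun x => by simp only [integral_integral_mul_swap hf' (hfib x), mul_comm]
  simp only [hinner]
  exact integral_integral_mul_swap hf (memLp_two_integral_left hf')

lemma integral_sub_sq_eq {a b : Z → ℝ} (ha : MemLp a 2 ν) (hb : MemLp b 2 ν) :
    ∫ z, (a z - b z) ^ 2 ∂ν
      = ∫ z, a z * a z ∂ν - 2 * ∫ z, a z * b z ∂ν + ∫ z, b z * b z ∂ν := by
  have haa : Integrable (fun z => a z * a z) ν := ha.integrable_mul ha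
  have hab : Integrable (fun z => 2 * (a z * b z)) ν := (ha.integrable_mul hb).const_mul 2
  have hbb : Integrable (fun z => b z * b z) ν := hb.integrable_mul hb
  calc ∫ z, (a z - b z) ^ 2 ∂ν = ∫ z, a z * a z - 2 * (a z * b z) + b z * b z ∂ν := by
        congr 1; ext z; ring
    _ = _ := by
        rw [integral_add ?_ hbb, integral_sub haa hab, integral_const_mul]
        exact haa.sub hab

end MeanEmbedding

theorem mmd_sq_eq_L2_dist_of_mean_embeddings_general {d : ℕ}
    (krt : EuclideanSpace ℝ (Fin d) → EuclideanSpace ℝ (Fin d) → ℝ)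
    (hmeas : Measurable (Function.uncurry krt))
    (hsqint : ∀ x, Integrable (fun z => (krt x z) ^ 2))
    (Csq : ℝ) (hCsq : ∀ x, (∫ z, (krt x z) ^ 2) ≤ Csq)
    (k : EuclideanSpace ℝ (Fin d) → EuclideanSpace ℝ (Fin d) → ℝ)
    (hk : ∀ x y, k x y = ∫ z, krt x z * krt y z)
    (P Q : Measure (EuclideanSpace ℝ (Fin d)))
    [IsProbabilityMeasure P] [IsProbabilityMeasure Q] :
    ((∫ x, ∫ y, k x y ∂P ∂P) - 2 * (∫ y, ∫ x, k x y ∂P ∂Q) + (∫ x, ∫ y, k x y ∂Q ∂Q)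
        = ∫ z, (meanEmbed P krt z - meanEmbed Q krt z) ^ 2) ∧
    (0 ≤ (∫ x, ∫ y, k x y ∂P ∂P) - 2 * (∫ y, ∫ x, k x y ∂P ∂Q) + (∫ x, ∫ y, k x y ∂Q ∂Q)) := by
  have hL2P : MemLp (Function.uncurry krt) 2 (P.prod volume) :=
    memLp_two_uncurry_of_integral_sq_le hmeas.aestronglyMeasurable hsqint hCsq
  have hL2Q : MemLp (Function.uncurry krt) 2 (Q.prod volume) :=
    memLp_two_uncurry_of_integral_sq_le hmeas.aestronglyMeasurable hsqint hCsq
  have hfib : ∀ x, MemLp (krt x) 2 volume := fun x =>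
    (memLp_two_iff_integrable_sq hmeas.of_uncurry_left.aestronglyMeasurable).2 (hsqint x)
  have hPP : ∫ x, ∫ y, k x y ∂P ∂P = ∫ z, meanEmbed P krt z * meanEmbed P krt z := by
    simp only [hk]
    exact integral_integral_integral_mul hL2P hL2P hfib
  have hk_symm : ∀ x y, k x y = ∫ z, krt y z * krt x z := by
    simp only [hk, mul_comm, implies_true]
  have hPQ : ∫ y, ∫ x, k x y ∂P ∂Q = ∫ z, meanEmbed P krt z * meanEmbed Q krt z := by
    simp only [hk_symm]
    exact integral_integral_integral_mul hL2Q hL2P hfib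
  have hQQ : ∫ x, ∫ y, k x y ∂Q ∂Q = ∫ z, meanEmbed Q krt z * meanEmbed Q krt z := by
    simp only [hk]
    exact integral_integral_integral_mul hL2Q hL2Q hfib
  have hdist : _ = _ :=
    integral_sub_sq_eq (memLp_two_integral_left hL2P) (memLp_two_integral_left hL2Q)
  rw [hPP, hPQ, hQQ]
  exact ⟨hdist.symm, hdist ▸ integral_nonneg fun z => sq_nonneg _⟩

/-- Saitoh-type identity: for `k(x,y) = ∫ k_rt(x,z) k_rt(y,z) dz`,
`∬k dP dP − 2∬k dP dQ + ∬k dQ dQ = ∫ (Pk_rt(z) − Qk_rt(z))² dz ≥ 0`;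
the left-hand side equals `MMD_k(P,Q)²`. -/
theorem mmd_sq_eq_L2_dist_of_mean_embeddings {d : ℕ} (hd : 1 ≤ d)
    (krt : EuclideanSpace ℝ (Fin d) → EuclideanSpace ℝ (Fin d) → ℝ)
    (hmeas : Measurable (Function.uncurry krt))
    (hsqint : ∀ x, Integrable (fun z => (krt x z) ^ 2))
    (Csq : ℝ) (hCsq : ∀ x, (∫ z, (krt x z) ^ 2) ≤ Csq)
    (k : EuclideanSpace ℝ (Fin d) → EuclideanSpace ℝ (Fin d) → ℝ)
    (hk : ∀ x y, k x y = ∫ z, krt x z * krt y z)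
    (P Q : Measure (EuclideanSpace ℝ (Fin d)))
    [IsProbabilityMeasure P] [IsProbabilityMeasure Q]
    (hPint : ∀ z, Integrable (fun x => krt x z) P)
    (hQint : ∀ z, Integrable (fun x => krt x z) Q) :
    ((∫ x, ∫ y, k x y ∂P ∂P) - 2 * (∫ y, ∫ x, k x y ∂P ∂Q) + (∫ x, ∫ y, k x y ∂Q ∂Q)
        = ∫ z, (meanEmbed P krt z - meanEmbed Q krt z) ^ 2) ∧
    (0 ≤ (∫ x, ∫ y, k x y ∂P ∂P) - 2 * (∫ y, ∫ x, k x y ∂P ∂Q) + (∫ x, ∫ y, k x y ∂Q ∂Q)) :=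
  mmd_sq_eq_L2_dist_of_mean_embeddings_general krt hmeas hsqint Csq hCsq k hk P Q
end

section
/- Let H be a real inner product space, let f, u ∈ H, let c > 0 and σ ≥ 0, and set σ'² := σ² + ‖f‖² · (1 + (σ²/c²)(‖f‖² − 2c))₊, where (t)₊ := max(t,0). Then (1/2)⟨f,u⟩² + (σ²/2) ‖u − (⟨f,u⟩/c) f‖² ≤ (σ'²/2) ‖u‖². -/
open RealInnerProductSpace

/-!
Writing `t = ⟪f, u⟫` and `m = 1 + (σ²/c²)(‖f‖² − 2c)`, expanding the square turns the left-hand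
side into `(σ²/2)‖u‖² + (t²/2) m`, an algebraic identity. Since `t² ≤ ‖f‖²‖u‖²` by Cauchy–Schwarz,
`t² m ≤ ‖f‖²‖u‖² m₊`, which is the claim.
-/

lemma norm_sub_smul_sq_real {H : Type*} [NormedAddCommGroup H] [InnerProductSpace ℝ H]
    (f u : H) (r : ℝ) :
    ‖u - r • f‖ ^ 2 = ‖u‖ ^ 2 - 2 * r * ⟪f, u⟫ + r ^ 2 * ‖f‖ ^ 2 := by
  rw [norm_sub_sq_real, inner_smul_right, real_inner_comm, norm_smul, mul_pow,
    Real.norm_eq_abs, sq_abs]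
  ring

lemma real_inner_sq_le_norm_sq_mul_norm_sq {H : Type*} [NormedAddCommGroup H]
    [InnerProductSpace ℝ H] (f u : H) : ⟪f, u⟫ ^ 2 ≤ ‖f‖ ^ 2 * ‖u‖ ^ 2 := by
  simpa only [sq, real_inner_self_eq_norm_sq] using real_inner_mul_inner_self_le f u

lemma mul_le_mul_max_zero {a b m : ℝ} (ha : 0 ≤ a) (hab : a ≤ b) : a * m ≤ b * max m 0 :=
  calc a * m ≤ a * max m 0 := mul_le_mul_of_nonneg_left (le_max_left m 0) ha
    _ ≤ b * max m 0 := mul_le_mul_of_nonneg_right hab (le_max_right m 0)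

theorem self_balancing_exponent_bound_general {H : Type*} [NormedAddCommGroup H]
    [InnerProductSpace ℝ H] (f u : H) (c σ : ℝ) :
    (1 / 2) * ⟪f, u⟫ ^ 2 + (σ ^ 2 / 2) * ‖u - (⟪f, u⟫ / c) • f‖ ^ 2
      ≤ ((σ ^ 2 + ‖f‖ ^ 2 * max (1 + (σ ^ 2 / c ^ 2) * (‖f‖ ^ 2 - 2 * c)) 0) / 2) * ‖u‖ ^ 2 := by
  set m := 1 + (σ ^ 2 / c ^ 2) * (‖f‖ ^ 2 - 2 * c) with hm_def
  have hm : ⟪f, u⟫ ^ 2 * m ≤ ‖f‖ ^ 2 * ‖u‖ ^ 2 * max m 0 :=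
    mul_le_mul_max_zero (sq_nonneg _) (real_inner_sq_le_norm_sq_mul_norm_sq f u)
  calc (1 / 2) * ⟪f, u⟫ ^ 2 + (σ ^ 2 / 2) * ‖u - (⟪f, u⟫ / c) • f‖ ^ 2
      = (σ ^ 2 / 2) * ‖u‖ ^ 2 + (1 / 2) * (⟪f, u⟫ ^ 2 * m) := by
        -- `ring` cannot use `c * c⁻¹ ^ 2 = c⁻¹`, which holds in any field (also at `c = 0`)
        rw [norm_sub_smul_sq_real, hm_def]; grind
    _ ≤ (σ ^ 2 / 2) * ‖u‖ ^ 2 + (1 / 2) * (‖f‖ ^ 2 * ‖u‖ ^ 2 * max m 0) := by gcongr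
    _ = ((σ ^ 2 + ‖f‖ ^ 2 * max m 0) / 2) * ‖u‖ ^ 2 := by ring

/-- Key exponent computation for the self-balancing Hilbert walk: in a real inner
product space, for `c > 0`, `σ ≥ 0`, and
`σ'² := σ² + ‖f‖²(1 + (σ²/c²)(‖f‖² − 2c))₊`,
`(1/2)⟨f,u⟩² + (σ²/2)‖u − (⟨f,u⟩/c)f‖² ≤ (σ'²/2)‖u‖²`. -/
theorem self_balancing_exponent_bound {H : Type*} [NormedAddCommGroup H]
    [InnerProductSpace ℝ H] (f u : H) (c σ : ℝ) (hc : 0 < c) (hσ : 0 ≤ σ) :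
    (1 / 2) * ⟪f, u⟫ ^ 2 + (σ ^ 2 / 2) * ‖u - (⟪f, u⟫ / c) • f‖ ^ 2
      ≤ ((σ ^ 2 + ‖f‖ ^ 2 * max (1 + (σ ^ 2 / c ^ 2) * (‖f‖ ^ 2 - 2 * c)) 0) / 2) * ‖u‖ ^ 2 :=
  self_balancing_exponent_bound_general f u c σ
end

section
/- Let (Ω, 𝓕, ℙ) be a probability space, H a separable real Hilbert space, σ ≥ 0, and W : Ω → H a measurable random element with 𝔼[exp(⟨W, u⟩)] ≤ exp(σ² ‖u‖²/2) for all u ∈ H. Let ε : Ω → ℝ be a random variable satisfying 𝔼[exp(t ε) | σ(W)] ≤ exp(t²/2) almost surely for every t ∈ ℝ. Fix f ∈ H and c > 0 and define W' := W − (⟨W, f⟩/c) f + ε f. Then for all u ∈ H, 𝔼[exp(⟨W', u⟩)] ≤ exp(σ'² ‖u‖²/2), where σ'² := σ² + ‖f‖² (1 + (σ²/c²)(‖f‖² − 2c))₊ and (t)₊ := max(t,0). -/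
open MeasureTheory RealInnerProductSpace

/-!
With `t = ⟪f, u⟫` and `v = u - (t / c) • f` one has `⟪W', u⟫ = ⟪W, v⟫ + t ε`. Conditioning on
`σ(W)` pulls `exp ⟪W, v⟫` out of the expectation and bounds `𝔼[exp (t ε) | W]` by `exp (t² / 2)`,
so the sub-Gaussianity of `W` gives `𝔼[exp ⟪W', u⟫] ≤ exp ((t² + σ² ‖v‖²) / 2)`. Expanding
`‖v‖²` turns `t² + σ² ‖v‖²` into `σ² ‖u‖² + t² (1 + (σ² / c²) (‖f‖² - 2c))`, and Cauchy–Schwarz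
`t² ≤ ‖f‖² ‖u‖²` finishes.
-/

section Integral

variable {Ω : Type*} {m m₀ : MeasurableSpace Ω} {μ : Measure[m₀] Ω}

theorem integral_mul_le_of_condExp_le [IsFiniteMeasure μ] (hm : m ≤ m₀) {g e : Ω → ℝ} {C : ℝ}
    (hg : AEStronglyMeasurable[m] g μ) (hg₀ : 0 ≤ᵐ[μ] g) (hgi : Integrable g μ)
    (hge : Integrable (g * e) μ) (hei : Integrable e μ) (hC : ∀ᵐ ω ∂μ, μ[e | m] ω ≤ C) :
    ∫ ω, g ω * e ω ∂μ ≤ C * ∫ ω, g ω ∂μ := by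
  have hpull := condExp_mul_of_aestronglyMeasurable_left hg hge hei
  calc ∫ ω, g ω * e ω ∂μ = ∫ ω, (μ[g * e | m]) ω ∂μ := (integral_condExp hm).symm
    _ = ∫ ω, g ω * (μ[e | m]) ω ∂μ := integral_congr_ae hpull
    _ ≤ ∫ ω, g ω * C ∂μ := by
      refine integral_mono_ae (integrable_condExp.congr hpull) (hgi.mul_const C) ?_
      filter_upwards [hg₀, hC] with ω hω₀ hω
      exact mul_le_mul_of_nonneg_left hω hω₀
    _ = C * ∫ ω, g ω ∂μ := by rw [integral_mul_const, mul_comm]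

theorem integrable_exp_mul_exp {X Y : Ω → ℝ}
    (hX : Integrable (fun ω => Real.exp (X ω)) μ) (hX₂ : Integrable (fun ω => Real.exp (2 * X ω)) μ)
    (hY : Integrable (fun ω => Real.exp (Y ω)) μ) (hY₂ : Integrable (fun ω => Real.exp (2 * Y ω)) μ) :
    Integrable ((fun ω => Real.exp (X ω)) * fun ω => Real.exp (Y ω)) μ := by
  have memLp_two {Z : Ω → ℝ} (hZ : Integrable (fun ω => Real.exp (Z ω)) μ)
      (hZ₂ : Integrable (fun ω => Real.exp (2 * Z ω)) μ) :
      MemLp (fun ω => Real.exp (Z ω)) 2 μ := by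
    refine (memLp_two_iff_integrable_sq hZ.aestronglyMeasurable).2 ?_
    simpa only [← Real.exp_nat_mul, Nat.cast_ofNat] using hZ₂
  exact (memLp_two hX hX₂).integrable_mul (memLp_two hY hY₂)

end Integral

section Inner

variable {H : Type*} [NormedAddCommGroup H] [InnerProductSpace ℝ H]

theorem inner_sub_div_smul_add_smul (w f u : H) (c e : ℝ) :
    ⟪w - (⟪w, f⟫ / c) • f + e • f, u⟫ = ⟪w, u - (⟪f, u⟫ / c) • f⟫ + ⟪f, u⟫ * e := by
  simp only [inner_add_left, inner_sub_left, inner_sub_right, real_inner_smul_left,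
    real_inner_smul_right]
  ring

theorem sq_inner_add_mul_norm_sub_sq_le (σ c : ℝ) (f u : H) :
    ⟪f, u⟫ ^ 2 + σ ^ 2 * ‖u - (⟪f, u⟫ / c) • f‖ ^ 2 ≤
      (σ ^ 2 + ‖f‖ ^ 2 * max (1 + σ ^ 2 / c ^ 2 * (‖f‖ ^ 2 - 2 * c)) 0) * ‖u‖ ^ 2 := by
  set t := ⟪f, u⟫
  set A := 1 + σ ^ 2 / c ^ 2 * (‖f‖ ^ 2 - 2 * c)
  have hnorm : ‖u - (t / c) • f‖ ^ 2 = ‖u‖ ^ 2 - 2 * (t / c) * t + (t / c) ^ 2 * ‖f‖ ^ 2 := by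
    rw [norm_sub_sq_real, real_inner_smul_right, real_inner_comm, norm_smul, mul_pow,
      Real.norm_eq_abs, sq_abs]
    ring
  -- `c / c ^ 2 = c⁻¹` holds also at `c = 0`, where both sides are `0`
  have hc : c / c ^ 2 = c⁻¹ := by rw [sq, div_self_mul_self']
  have hid : t ^ 2 + σ ^ 2 * ‖u - (t / c) • f‖ ^ 2 = σ ^ 2 * ‖u‖ ^ 2 + t ^ 2 * A := by
    rw [hnorm]
    linear_combination 2 * σ ^ 2 * t ^ 2 * hc
  have hCS : t ^ 2 ≤ ‖f‖ ^ 2 * ‖u‖ ^ 2 := by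
    rw [← mul_pow, ← sq_abs]
    exact pow_le_pow_left₀ (abs_nonneg _) (abs_real_inner_le_norm f u) 2
  have hA : t ^ 2 * A ≤ ‖f‖ ^ 2 * ‖u‖ ^ 2 * max A 0 :=
    (mul_le_mul_of_nonneg_left (le_max_left A 0) (sq_nonneg t)).trans
      (mul_le_mul_of_nonneg_right hCS (le_max_right A 0))
  linarith

end Inner

theorem self_balancing_one_step_subGaussian_general {Ω : Type*} [MeasurableSpace Ω]
    (μ : Measure Ω) [IsProbabilityMeasure μ]
    {H : Type*} [NormedAddCommGroup H] [InnerProductSpace ℝ H]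
    [MeasurableSpace H] [BorelSpace H]
    (σ : ℝ) (W : Ω → H) (hW : Measurable W)
    (hWint : ∀ u : H, Integrable (fun ω => Real.exp ⟪W ω, u⟫) μ)
    (hWsub : ∀ u : H, (∫ ω, Real.exp ⟪W ω, u⟫ ∂μ) ≤ Real.exp (σ ^ 2 * ‖u‖ ^ 2 / 2))
    (ε : Ω → ℝ)
    (hεint : ∀ t : ℝ, Integrable (fun ω => Real.exp (t * ε ω)) μ)
    (hεcond : ∀ t : ℝ, ∀ᵐ ω ∂μ,
      (μ[fun ω => Real.exp (t * ε ω) | MeasurableSpace.comap W inferInstance]) ω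
        ≤ Real.exp (t ^ 2 / 2))
    (f : H) (c : ℝ) :
    ∀ u : H,
      (∫ ω, Real.exp ⟪W ω - (⟪W ω, f⟫ / c) • f + ε ω • f, u⟫ ∂μ)
        ≤ Real.exp ((σ ^ 2 + ‖f‖ ^ 2 * max (1 + (σ ^ 2 / c ^ 2) * (‖f‖ ^ 2 - 2 * c)) 0)
            * ‖u‖ ^ 2 / 2) := by
  intro u
  set t := ⟪f, u⟫
  set v := u - (t / c) • f
  have hWv_meas : AEStronglyMeasurable[MeasurableSpace.comap W inferInstance]
      (fun ω => Real.exp ⟪W ω, v⟫) μ :=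
    ((Real.continuous_exp.comp (continuous_id.inner continuous_const)).measurable.comp
      (measurable_iff_comap_le.2 le_rfl)).aestronglyMeasurable
  have hprod := integrable_exp_mul_exp (hWint v)
    (by simpa only [real_inner_smul_right] using hWint ((2 : ℝ) • v))
    (hεint t) (by simpa only [mul_assoc] using hεint (2 * t))
  calc (∫ ω, Real.exp ⟪W ω - (⟪W ω, f⟫ / c) • f + ε ω • f, u⟫ ∂μ)
      = ∫ ω, Real.exp ⟪W ω, v⟫ * Real.exp (t * ε ω) ∂μ := by
        simp only [inner_sub_div_smul_add_smul, Real.exp_add]; rfl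
    _ ≤ Real.exp (t ^ 2 / 2) * ∫ ω, Real.exp ⟪W ω, v⟫ ∂μ :=
        integral_mul_le_of_condExp_le hW.comap_le hWv_meas
          (.of_forall fun _ => (Real.exp_pos _).le) (hWint v) hprod (hεint t) (hεcond t)
    _ ≤ Real.exp (t ^ 2 / 2) * Real.exp (σ ^ 2 * ‖v‖ ^ 2 / 2) := by gcongr; exact hWsub v
    _ = Real.exp ((t ^ 2 + σ ^ 2 * ‖v‖ ^ 2) / 2) := by rw [← Real.exp_add]; ring_nf
    _ ≤ _ := by
        gcongr
        exact sq_inner_add_mul_norm_sub_sq_le σ c f u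

/-- One-step functional sub-Gaussianity of the self-balancing Hilbert walk: if `W` is
`σ` sub-Gaussian in the Hilbert space `H`, `ε` is conditionally `1` sub-Gaussian given
`σ(W)`, and `W' = W − (⟨W,f⟩/c)f + εf`, then `W'` is `σ'` sub-Gaussian with
`σ'² = σ² + ‖f‖²(1 + (σ²/c²)(‖f‖² − 2c))₊`. -/
theorem self_balancing_one_step_subGaussian {Ω : Type*} [MeasurableSpace Ω]
    (μ : Measure Ω) [IsProbabilityMeasure μ]
    {H : Type*} [NormedAddCommGroup H] [InnerProductSpace ℝ H] [CompleteSpace H]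
    [TopologicalSpace.SeparableSpace H] [MeasurableSpace H] [BorelSpace H]
    (σ : ℝ) (hσ : 0 ≤ σ) (W : Ω → H) (hW : Measurable W)
    (hWint : ∀ u : H, Integrable (fun ω => Real.exp ⟪W ω, u⟫) μ)
    (hWsub : ∀ u : H, (∫ ω, Real.exp ⟪W ω, u⟫ ∂μ) ≤ Real.exp (σ ^ 2 * ‖u‖ ^ 2 / 2))
    (ε : Ω → ℝ) (hε : Measurable ε)
    (hεint : ∀ t : ℝ, Integrable (fun ω => Real.exp (t * ε ω)) μ)
    (hεcond : ∀ t : ℝ, ∀ᵐ ω ∂μ,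
      (μ[fun ω => Real.exp (t * ε ω) | MeasurableSpace.comap W inferInstance]) ω
        ≤ Real.exp (t ^ 2 / 2))
    (f : H) (c : ℝ) (hc : 0 < c) :
    ∀ u : H,
      (∫ ω, Real.exp ⟪W ω - (⟪W ω, f⟫ / c) • f + ε ω • f, u⟫ ∂μ)
        ≤ Real.exp ((σ ^ 2 + ‖f‖ ^ 2 * max (1 + (σ ^ 2 / c ^ 2) * (‖f‖ ^ 2 - 2 * c)) 0)
            * ‖u‖ ^ 2 / 2) :=
  self_balancing_one_step_subGaussian_general μ σ W hW hWint hWsub ε hεint hεcond f c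
end

section
/- Let n ≥ 1, let a₁, …, a_n ≥ 0 and γ₁, …, γ_n ≥ 0 with γ* := max_{i≤n} γ_i > 0, and set c_i := max(γ_i σ_{i−1} a_i, a_i²). Define σ₀ := 0 and, for i = 1, …, n, σ_i² := σ_{i−1}² + a_i² (1 + (σ_{i−1}²/c_i²)(a_i² − 2c_i))₊ when a_i > 0 (so that c_i > 0), and σ_i² := σ_{i−1}² when a_i = 0, where (t)₊ := max(t,0). Then σ_n² ≤ ((max_{i≤n} a_i²)/4) · (γ* + 1/γ*)². -/
/-!
Write `t = σ_{i-1}²`. If the threshold is `a²`, one step gives `max(t, a²)`; if it is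
`γ √t a`, the step simplifies to `max(t, (√t - a/γ)² + a²)`. In both cases the new value is
at most `max(t, r²)` with `r = √A (X + 1/X) / 2`, `A = max a_i²`, `X = γ*`: the quadratic
`u ↦ (u - a/γ)² + a²` is convex, so on `a/γ ≤ u ≤ r` it is maximal at `u = r`, where the
bound reduces to `a (γ + 1/γ) ≤ √A (X + 1/X)`. Hence `r²` is an invariant of the recursion.
-/

open Real

lemma two_le_add_inv {x : ℝ} (hx : 0 < x) : 2 ≤ x + x⁻¹ := by
  have h : x + x⁻¹ - 2 = (x - 1) ^ 2 / x := by field_simp; ring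
  linarith [div_nonneg (sq_nonneg (x - 1)) hx.le]

lemma add_inv_le_add_inv {x y : ℝ} (hx : 1 ≤ x) (hxy : x ≤ y) : x + x⁻¹ ≤ y + y⁻¹ := by
  have hy : 0 < y := by linarith
  have h : y + y⁻¹ - (x + x⁻¹) = (y - x) * (x * y - 1) / (x * y) := by
    field_simp; ring
  have : 0 ≤ (y - x) * (x * y - 1) / (x * y) :=
    div_nonneg (mul_nonneg (by linarith) (by nlinarith)) (by positivity)
  linarith

lemma mul_add_inv_le {a γ m X : ℝ} (ha : 0 ≤ a) (ham : a ≤ m) (hγ : 0 < γ) (hγX : γ ≤ X)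
    (h : 2 * (a / γ) ≤ m * (X + X⁻¹)) : a * (γ + γ⁻¹) ≤ m * (X + X⁻¹) := by
  rcases le_total γ 1 with hγ1 | hγ1
  · have : a * γ ≤ a / γ := by
      have hγγ : γ * γ ≤ 1 := by nlinarith
      rw [le_div_iff₀ hγ]; nlinarith [mul_le_mul_of_nonneg_left hγγ ha]
    rw [mul_add, ← div_eq_mul_inv]; linarith
  · exact mul_le_mul ham (add_inv_le_add_inv hγ1 hγX) (by positivity) (ha.trans ham)

lemma sq_sub_div_add_sq_le {a γ m X u r : ℝ} (ha : 0 ≤ a) (ham : a ≤ m) (hγ : 0 < γ)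
    (hγX : γ ≤ X) (hr : 2 * r = m * (X + X⁻¹)) (hlo : a / γ ≤ u) (hhi : u ≤ r) :
    (u - a / γ) ^ 2 + a ^ 2 ≤ r ^ 2 := by
  have hp : 0 ≤ a / γ := div_nonneg ha hγ.le
  have hsq : (u - a / γ) ^ 2 ≤ (r - a / γ) ^ 2 :=
    pow_le_pow_left₀ (sub_nonneg.2 hlo) (by linarith) 2
  have hkey := mul_add_inv_le ha ham hγ hγX (by linarith)
  have hexp : a / γ * (a * (γ + γ⁻¹)) = a ^ 2 + (a / γ) ^ 2 := by field_simp
  nlinarith [mul_le_mul_of_nonneg_left hkey hp]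

/-- `σ_i²` in terms of `c = c_i`, `a = a_i` and `t = σ_{i-1}²`. -/
noncomputable def sigmaSqStep (c a t : ℝ) : ℝ :=
  t + a ^ 2 * max (1 + t / c ^ 2 * (a ^ 2 - 2 * c)) 0

lemma sigmaSqStep_eq_add_max (c a t : ℝ) :
    sigmaSqStep c a t = max (t + a ^ 2 * (1 + t / c ^ 2 * (a ^ 2 - 2 * c))) t := by
  rw [sigmaSqStep, mul_max_of_nonneg _ _ (sq_nonneg a), mul_zero, add_max, add_zero]

lemma sigmaSqStep_sq {a : ℝ} (ha : a ≠ 0) (t : ℝ) : sigmaSqStep (a ^ 2) a t = max (a ^ 2) t := by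
  rw [sigmaSqStep_eq_add_max]
  congr 1
  field_simp
  ring

lemma sigmaSqStep_mul_sqrt {γ a t : ℝ} (hγ : γ ≠ 0) (ha : a ≠ 0) (ht : 0 < t) :
    sigmaSqStep (γ * √t * a) a t = max ((√t - a / γ) ^ 2 + a ^ 2) t := by
  rw [sigmaSqStep_eq_add_max]
  congr 1
  nth_rewrite 1 [← sq_sqrt ht.le]
  nth_rewrite 2 [← sq_sqrt ht.le]
  field_simp
  ring

lemma sigmaSqStep_le {γ a t m X r : ℝ} (ha : 0 < a) (ham : a ≤ m) (hγ : 0 ≤ γ)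
    (hγX : γ ≤ X) (hX : 0 < X) (hr : 2 * r = m * (X + X⁻¹)) (ht : t ≤ r ^ 2) :
    sigmaSqStep (max (γ * √t * a) (a ^ 2)) a t ≤ r ^ 2 := by
  have hmr : m ≤ r := by nlinarith [two_le_add_inv hX]
  rcases le_total (γ * √t * a) (a ^ 2) with hc | hc
  · rw [max_eq_right hc, sigmaSqStep_sq ha.ne']
    exact max_le (pow_le_pow_left₀ ha.le (ham.trans hmr) 2) ht
  · have hγu : a ≤ γ * √t := le_of_mul_le_mul_right (by nlinarith) ha
    have hγ0 : 0 < γ := pos_of_mul_pos_left (ha.trans_le hγu) (sqrt_nonneg t)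
    have ht0 : 0 < t := sqrt_pos.1 (pos_of_mul_pos_right (ha.trans_le hγu) hγ)
    rw [max_eq_left hc, sigmaSqStep_mul_sqrt hγ0.ne' ha.ne' ht0]
    refine max_le (sq_sub_div_add_sq_le ha.le ham hγ0 hγX hr ?_ ?_) ht
    · rwa [div_le_iff₀ hγ0, mul_comm]
    · exact (sqrt_le_left (by linarith)).2 ht

/-- Adaptive thresholding bound for the self-balancing Hilbert walk recursion:
with thresholds `c_i = max(γ_i σ_{i−1} a_i, a_i²)` and the recursion
`σ_i² = σ_{i−1}² + a_i²(1 + (σ_{i−1}²/c_i²)(a_i² − 2c_i))₊` when `a_i > 0`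
(and `σ_i² = σ_{i−1}²` when `a_i = 0`), one has
`σ_n² ≤ ((max_{i≤n} a_i²)/4)(γ* + 1/γ*)²` for `γ* = max_{i≤n} γ_i > 0`.
Here `s i` denotes `σ_i²` (so `σ_{i−1} = √(s (i−1))`). -/
theorem adaptive_thresholding_bound (n : ℕ) (hn : 1 ≤ n) (a γ : ℕ → ℝ)
    (ha : ∀ i ∈ Finset.Icc 1 n, 0 ≤ a i) (hγ : ∀ i ∈ Finset.Icc 1 n, 0 ≤ γ i)
    (hγstar : 0 < (Finset.Icc 1 n).sup' (Finset.nonempty_Icc.mpr hn) γ)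
    (c s : ℕ → ℝ) (hs0 : s 0 = 0)
    (hcdef : ∀ i ∈ Finset.Icc 1 n,
      c i = max (γ i * Real.sqrt (s (i - 1)) * a i) ((a i) ^ 2))
    (hrec : ∀ i ∈ Finset.Icc 1 n,
      (0 < a i →
        s i = s (i - 1)
          + (a i) ^ 2 * max (1 + (s (i - 1) / (c i) ^ 2) * ((a i) ^ 2 - 2 * c i)) 0) ∧
      (a i = 0 → s i = s (i - 1))) :
    s n ≤ ((Finset.Icc 1 n).sup' (Finset.nonempty_Icc.mpr hn) (fun i => (a i) ^ 2)) / 4 *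
        ((Finset.Icc 1 n).sup' (Finset.nonempty_Icc.mpr hn) γ
          + 1 / (Finset.Icc 1 n).sup' (Finset.nonempty_Icc.mpr hn) γ) ^ 2 := by
  set X := (Finset.Icc 1 n).sup' (Finset.nonempty_Icc.mpr hn) γ
  set A := (Finset.Icc 1 n).sup' (Finset.nonempty_Icc.mpr hn) (fun i => (a i) ^ 2)
  have hA : 0 ≤ A := (sq_nonneg (a 1)).trans
    (Finset.le_sup' (fun i => (a i) ^ 2) (Finset.mem_Icc.mpr ⟨le_rfl, hn⟩))
  set r := √A / 2 * (X + X⁻¹)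
  have hr : r ^ 2 = A / 4 * (X + 1 / X) ^ 2 := by
    rw [one_div, mul_pow, div_pow, sq_sqrt hA]; ring
  rw [← hr]
  suffices ∀ i ≤ n, s i ≤ r ^ 2 from this n le_rfl
  intro i
  induction i with
  | zero => intro _; rw [hs0]; positivity
  | succ k ih =>
    intro hk
    have hmem : k + 1 ∈ Finset.Icc 1 n := Finset.mem_Icc.mpr ⟨by omega, hk⟩
    obtain ⟨hstep, hzero⟩ := hrec (k + 1) hmem
    rcases (ha _ hmem).eq_or_lt with h0 | hpos
    · rw [hzero h0.symm]; exact ih (by omega)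
    · have hc := hcdef (k + 1) hmem
      simp only [add_tsub_cancel_right] at hstep hc
      rw [hstep hpos, hc]
      exact sigmaSqStep_le hpos (le_sqrt_of_sq_le (Finset.le_sup' (fun i => (a i) ^ 2) hmem))
        (hγ _ hmem) (Finset.le_sup' γ hmem) hγstar (by ring) (ih (by omega))
end

section
/- Let d ≥ 1 and let k : ℝᵈ × ℝᵈ → ℝ have finite Lipschitz constant L_k := sup_{x, y ≠ z} |k(x,y) − k(x,z)|/‖y − z‖ and tail function τ̄_k(R) := sup{|k(x,y)| : ‖x − y‖ ≥ R}. Fix points x₁, …, x_n ∈ ℝᵈ and signs η₁, …, η_n ∈ {−1, 1}, and define ψ(x) := Σ_{i=1}^n η_i k(x_i, x). If 0 < r ≤ R and C ⊂ ℝᵈ is a finite set satisfying ∪_{i=1}^n B(x_i, R) ⊆ ∪_{z∈C} B(z, r), where B(x, R) denotes the open Euclidean ball of radius R centered at x, then sup_{x∈ℝᵈ} |ψ(x)| ≤ max(n · τ̄_k(R), n · L_k · r + max_{z∈C} |ψ(z)|). -/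
/-! If `w` lies at distance at least `R` from every `xᵢ`, each term of `ψ(w)` is at most `T`
in absolute value. Otherwise `w` lies in some ball `B(xᵢ, R)`, hence within `r` of a cover
point `z ∈ C`, and the Lipschitz bound on each term gives `|ψ(w) - ψ(z)| ≤ n L r`. -/

def signedKernelSum {E ι : Type*} [Fintype ι] (k : E → E → ℝ) (x : ι → E) (η : ι → ℝ)
    (w : E) : ℝ :=
  ∑ i, η i * k (x i) w

theorem abs_sum_mul_le_card_mul {ι : Type*} [Fintype ι] {η f : ι → ℝ} {M : ℝ}
    (hη : ∀ i, |η i| ≤ 1) (hf : ∀ i, |f i| ≤ M) :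
    |∑ i, η i * f i| ≤ Fintype.card ι * M :=
  calc |∑ i, η i * f i| ≤ ∑ i, |η i * f i| := Finset.abs_sum_le_sum_abs _ _
    _ ≤ ∑ _i : ι, M := Finset.sum_le_sum fun i _ => by
        rw [abs_mul]
        exact (mul_le_of_le_one_left (abs_nonneg _) (hη i)).trans (hf i)
    _ = Fintype.card ι * M := by simp

theorem nonneg_of_abs_sub_le_mul_norm {E : Type*} [NormedAddCommGroup E] [Nontrivial E]
    {g : E → ℝ} {L : ℝ} (hg : ∀ y z, |g y - g z| ≤ L * ‖y - z‖) : 0 ≤ L := by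
  obtain ⟨y, hy⟩ := exists_ne (0 : E)
  have hpos : 0 < ‖y - 0‖ := by simpa using hy
  exact nonneg_of_mul_nonneg_left ((abs_nonneg _).trans (hg y 0)) hpos

theorem Finset.le_ciSup_coe_of_mem {α β : Type*} [ConditionallyCompleteLattice β]
    {C : Finset α} (f : α → β) {z : α} (hz : z ∈ C) :
    f z ≤ ⨆ y ∈ (C : Set α), f y :=
  le_ciSup₂ (f := fun y (_ : y ∈ (C : Set α)) => f y)
    ((C.finite_toSet.image f).bddAbove.mono
      (Set.iUnion_subset fun _ => Set.range_subset_iff.2 fun hy => Set.mem_image_of_mem f hy)) z hz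

theorem abs_signedKernelSum_sub_le {E ι : Type*} [SeminormedAddCommGroup E] [Fintype ι]
    {k : E → E → ℝ} {x : ι → E} {η : ι → ℝ} (hη : ∀ i, |η i| ≤ 1) {L : ℝ}
    (hL : ∀ i y z, |k (x i) y - k (x i) z| ≤ L * ‖y - z‖) (w z : E) :
    |signedKernelSum k x η w - signedKernelSum k x η z| ≤ Fintype.card ι * (L * ‖w - z‖) := by
  simp only [signedKernelSum, ← Finset.sum_sub_distrib, ← mul_sub]
  exact abs_sum_mul_le_card_mul hη fun i => hL i w z

theorem signed_kernel_sum_covering_bound_general {d : ℕ} (hd : 1 ≤ d)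
    (k : EuclideanSpace ℝ (Fin d) → EuclideanSpace ℝ (Fin d) → ℝ)
    (L : ℝ) (hL : ∀ x y z, |k x y - k x z| ≤ L * ‖y - z‖)
    (R r : ℝ)
    (T : ℝ) (hT : ∀ x y : EuclideanSpace ℝ (Fin d), R ≤ ‖x - y‖ → |k x y| ≤ T)
    (n : ℕ) (x : Fin n → EuclideanSpace ℝ (Fin d))
    (η : Fin n → ℝ) (hη : ∀ i, η i = 1 ∨ η i = -1)
    (C : Finset (EuclideanSpace ℝ (Fin d)))
    (hcover : ∀ y : EuclideanSpace ℝ (Fin d),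
      (∃ i, y ∈ Metric.ball (x i) R) → ∃ z ∈ C, y ∈ Metric.ball z r) :
    ∀ w : EuclideanSpace ℝ (Fin d),
      |∑ i, η i * k (x i) w|
        ≤ max ((n : ℝ) * T)
            ((n : ℝ) * L * r + ⨆ z ∈ (C : Set (EuclideanSpace ℝ (Fin d))), |∑ i, η i * k (x i) z|) := by
  intro w
  have : Nonempty (Fin d) := ⟨⟨0, hd⟩⟩
  have hL0 : 0 ≤ L := nonneg_of_abs_sub_le_mul_norm (hL 0)
  have hη1 : ∀ i, |η i| ≤ 1 := fun i => by rcases hη i with h | h <;> simp [h]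
  change |signedKernelSum k x η w| ≤
    max (n * T) (n * L * r + ⨆ z ∈ (C : Set _), |signedKernelSum k x η z|)
  by_cases hfar : ∀ i, R ≤ ‖x i - w‖
  · refine le_max_of_le_left ?_
    exact (abs_sum_mul_le_card_mul hη1 fun i => hT _ _ (hfar i)).trans_eq (by rw [Fintype.card_fin])
  · push Not at hfar
    obtain ⟨i, hi⟩ := hfar
    obtain ⟨z, hzC, hwz⟩ := hcover w ⟨i, by rwa [mem_ball_iff_norm']⟩
    rw [mem_ball_iff_norm] at hwz
    have hnear : |signedKernelSum k x η w - signedKernelSum k x η z| ≤ n * L * r := by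
      have h := abs_signedKernelSum_sub_le hη1 (fun i => hL (x i)) w z
      rw [Fintype.card_fin, ← mul_assoc] at h
      exact h.trans (by gcongr)
    refine le_max_of_le_right ?_
    calc |signedKernelSum k x η w|
        ≤ |signedKernelSum k x η w - signedKernelSum k x η z| + |signedKernelSum k x η z| :=
          sub_le_iff_le_add.1 (abs_sub_abs_le_abs_sub _ _)
      _ ≤ n * L * r + ⨆ z ∈ (C : Set _), |signedKernelSum k x η z| :=
          add_le_add hnear (Finset.le_ciSup_coe_of_mem (fun y => |signedKernelSum k x η y|) hzC)

/-- Deterministic covering bound for the signed kernel sum `ψ = Σᵢ ηᵢ k(xᵢ,·)`: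
if `k` has Lipschitz constant (in its second argument) at most `L`, `|k(x,y)| ≤ T`
whenever `‖x − y‖ ≥ R`, and the finite set `C` is an `r`-cover of `∪ᵢ B(xᵢ, R)`
with `0 < r ≤ R`, then `sup_x |ψ(x)| ≤ max(n T, n L r + max_{z ∈ C} |ψ(z)|)`. -/
theorem signed_kernel_sum_covering_bound {d : ℕ} (hd : 1 ≤ d)
    (k : EuclideanSpace ℝ (Fin d) → EuclideanSpace ℝ (Fin d) → ℝ)
    (L : ℝ) (hL : ∀ x y z, |k x y - k x z| ≤ L * ‖y - z‖)
    (R r : ℝ) (hr : 0 < r) (hrR : r ≤ R)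
    (T : ℝ) (hT : ∀ x y : EuclideanSpace ℝ (Fin d), R ≤ ‖x - y‖ → |k x y| ≤ T)
    (n : ℕ) (hn : 1 ≤ n) (x : Fin n → EuclideanSpace ℝ (Fin d))
    (η : Fin n → ℝ) (hη : ∀ i, η i = 1 ∨ η i = -1)
    (C : Finset (EuclideanSpace ℝ (Fin d)))
    (hcover : ∀ y : EuclideanSpace ℝ (Fin d),
      (∃ i, y ∈ Metric.ball (x i) R) → ∃ z ∈ C, y ∈ Metric.ball z r) :
    ∀ w : EuclideanSpace ℝ (Fin d),
      |∑ i, η i * k (x i) w|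
        ≤ max ((n : ℝ) * T)
            ((n : ℝ) * L * r + ⨆ z ∈ (C : Set (EuclideanSpace ℝ (Fin d))), |∑ i, η i * k (x i) z|) :=
  signed_kernel_sum_covering_bound_general hd k L hL R r T hT n x η hη C hcover
end

section
/- For every integer d ≥ 1 and all reals β > 0 and D > 0 with β/D² ≥ 2: ∫₀^D √(log(1 + (1 + β/u²)^d)) du ≤ √d · D · (3 + √(2 log(β/D²))). -/
/-!
For `0 < u ≤ D` we have `β/u² ≥ β/D² ≥ 2`, so `1 + (1 + β/u²)^d ≤ (3β/u²)^d` and the integrand is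
at most `√d · √(L + log 3 + 2 log (D/u))` with `L = log (β/D²)`. The AM-GM bound
`√(L + b) ≤ √L + (b + 1)/2` makes this linear in `log (D/u)`, whose integral over `(0, D]` is
exactly `D`; what is left is `√d · D · (√L + (3 + log 3)/2)`, and `log 3 ≤ 2`.
-/

open Real Set MeasureTheory

lemma Real.sqrt_add_le_sqrt_add_half {a b : ℝ} (ha : 0 ≤ a) (hb : 0 ≤ b) :
    √(a + b) ≤ √a + (b + 1) / 2 := by
  rw [sqrt_le_left (by positivity)]
  nlinarith [sq_sqrt ha, sqrt_nonneg a, sq_nonneg (b - 1)]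

lemma Real.log_one_add_one_add_pow_le {t : ℝ} (ht : 2 ≤ t) {d : ℕ} (hd : 1 ≤ d) :
    log (1 + (1 + t) ^ d) ≤ d * log (3 * t) := by
  have hpow : 1 ≤ (1 + t) ^ d := one_le_pow₀ (by linarith)
  have hlog2 : 0 ≤ log 2 := log_nonneg one_le_two
  have hd' : (1 : ℝ) ≤ d := by exact_mod_cast hd
  calc log (1 + (1 + t) ^ d) ≤ log (2 * (1 + t) ^ d) := log_le_log (by positivity) (by linarith)
    _ = log 2 + d * log (1 + t) := by rw [log_mul two_ne_zero (by positivity), log_pow]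
    _ ≤ d * (log 2 + log (1 + t)) := by nlinarith
    _ = d * log (2 * (1 + t)) := by rw [log_mul two_ne_zero (by linarith)]
    _ ≤ d * log (3 * t) := by gcongr d * log ?_; linarith

lemma intervalIntegral.integral_mono_of_nonneg_of_le {f g : ℝ → ℝ} {a b : ℝ} (hab : a ≤ b)
    (hf : ∀ x ∈ Ioc a b, 0 ≤ f x) (hg : IntervalIntegrable g volume a b)
    (hfg : ∀ x ∈ Ioc a b, f x ≤ g x) :
    ∫ x in a..b, f x ≤ ∫ x in a..b, g x := by
  rw [intervalIntegral.integral_of_le hab, intervalIntegral.integral_of_le hab]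
  exact integral_mono_of_nonneg ((ae_restrict_iff' measurableSet_Ioc).2 (.of_forall hf))
    hg.1 ((ae_restrict_iff' measurableSet_Ioc).2 (.of_forall hfg))

lemma integral_const_add_log_sub_log (c D : ℝ) :
    ∫ u in (0 : ℝ)..D, (c + (log D - log u)) = D * (c + 1) := by
  rw [intervalIntegral.integral_add intervalIntegrable_const
      (intervalIntegrable_const.sub intervalIntegral.intervalIntegrable_log'),
    intervalIntegral.integral_sub intervalIntegrable_const
      intervalIntegral.intervalIntegrable_log', integral_log]
  simp only [intervalIntegral.integral_const, sub_zero, smul_eq_mul, zero_mul, log_zero]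
  ring

lemma sqrt_log_one_add_one_add_pow_le {d : ℕ} (hd : 1 ≤ d) {β D u : ℝ} (h2 : 2 ≤ β / D ^ 2)
    (hu : 0 < u) (huD : u ≤ D) :
    √(log (1 + (1 + β / u ^ 2) ^ d))
      ≤ √d * (√(log (β / D ^ 2)) + (1 + log 3) / 2 + (log D - log u)) := by
  have hD : 0 < D := hu.trans_le huD
  have hDu : 1 ≤ D / u := (one_le_div hu).2 huD
  have hscale : β / u ^ 2 = β / D ^ 2 * (D / u) ^ 2 := by field_simp
  have h2u : 2 ≤ β / u ^ 2 := by
    rw [hscale]; nlinarith [one_le_pow₀ (n := 2) hDu]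
  have hsplit : log (3 * (β / u ^ 2)) = log (β / D ^ 2) + (log 3 + 2 * (log D - log u)) := by
    rw [hscale, mul_left_comm, log_mul (by positivity) (by positivity),
      log_mul (by norm_num) (by positivity), log_pow, log_div hD.ne' hu.ne']
    push_cast; ring
  have hL : 0 ≤ log (β / D ^ 2) := log_nonneg (by linarith)
  have hb : 0 ≤ log 3 + 2 * (log D - log u) := by
    have := log_le_log hu huD
    have := log_nonneg (show (1 : ℝ) ≤ 3 by norm_num)
    linarith
  calc √(log (1 + (1 + β / u ^ 2) ^ d))
      ≤ √(d * (log (β / D ^ 2) + (log 3 + 2 * (log D - log u)))) :=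
        sqrt_le_sqrt (hsplit ▸ log_one_add_one_add_pow_le h2u hd)
    _ = √d * √(log (β / D ^ 2) + (log 3 + 2 * (log D - log u))) := sqrt_mul (by positivity) _
    _ ≤ √d * (√(log (β / D ^ 2)) + (1 + log 3) / 2 + (log D - log u)) := by
        gcongr
        linarith [sqrt_add_le_sqrt_add_half hL hb]

theorem dudley_entropy_integral_le_general (d : ℕ) (hd : 1 ≤ d) (β D : ℝ) (hD : 0 < D)
    (h2 : 2 ≤ β / D ^ 2) :
    (∫ u in (0 : ℝ)..D, Real.sqrt (Real.log (1 + (1 + β / u ^ 2) ^ d)))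
      ≤ Real.sqrt d * D * (3 + Real.sqrt (2 * Real.log (β / D ^ 2))) := by
  set c := √(log (β / D ^ 2)) + (1 + log 3) / 2 with hc_def
  have hint : IntervalIntegrable (fun u ↦ √d * (c + (log D - log u))) volume 0 D :=
    (intervalIntegrable_const.add
      (intervalIntegrable_const.sub intervalIntegral.intervalIntegrable_log')).const_mul _
  have hbound := intervalIntegral.integral_mono_of_nonneg_of_le hD.le
    (fun u _ ↦ sqrt_nonneg _) hint
    (fun u hu ↦ sqrt_log_one_add_one_add_pow_le hd h2 hu.1 hu.2)
  have hval : ∫ u in (0 : ℝ)..D, √d * (c + (log D - log u)) = √d * D * (c + 1) := by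
    rw [intervalIntegral.integral_const_mul, integral_const_add_log_sub_log, mul_assoc]
  have hc : c + 1 ≤ 3 + √(2 * log (β / D ^ 2)) := by
    have hlog3 := log_le_sub_one_of_pos (show (0 : ℝ) < 3 by norm_num)
    have hsqrt := sqrt_le_sqrt (show log (β / D ^ 2) ≤ 2 * log (β / D ^ 2) by
      linarith [log_nonneg (show (1 : ℝ) ≤ β / D ^ 2 by linarith)])
    linarith [hc_def]
  calc _ ≤ _ := hbound
    _ = √d * D * (c + 1) := hval
    _ ≤ √d * D * (3 + √(2 * log (β / D ^ 2))) := by gcongr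

/-- Bound on the Dudley entropy integral: for every integer `d ≥ 1` and reals
`β, D > 0` with `β/D² ≥ 2`,
`∫₀^D √(log(1 + (1 + β/u²)^d)) du ≤ √d · D · (3 + √(2 log(β/D²)))`. -/
theorem dudley_entropy_integral_le (d : ℕ) (hd : 1 ≤ d) (β D : ℝ) (hβ : 0 < β) (hD : 0 < D)
    (h2 : 2 ≤ β / D ^ 2) :
    (∫ u in (0 : ℝ)..D, Real.sqrt (Real.log (1 + (1 + β / u ^ 2) ^ d)))
      ≤ Real.sqrt d * D * (3 + Real.sqrt (2 * Real.log (β / D ^ 2))) :=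
  dudley_entropy_integral_le_general d hd β D hD h2
end

section
/- For all real numbers a ≥ 1 and r > 0 with r ≥ 2(a − 1): (1/2) ∫₀^∞ e^{−r cosh t} cosh(a t) dt ≤ (4/r) e^{−r/2}, where cosh t = (e^t + e^{−t})/2. -/
/-!
Since `cosh (a t) ≤ exp (a t)` and `a ≤ 1 + r/2`, the integrand is at most
`exp (t - (r/2) (2 cosh t - t))`. The elementary inequality `2 cosh t - t ≥ (exp t + 3)/4`
turns this into `exp (-3r/8) · exp (t - (r/8) exp t)`, whose integral over `(0, ∞)` is
`exp (-3r/8) · exp (-r/8) / (r/8) = (8/r) exp (-r/2)`, since `t ↦ -exp (-b exp t) / b` is an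
antiderivative of `exp (t - b exp t)`.
-/

open MeasureTheory Real Set Filter Topology

namespace Real

lemma cosh_le_exp_of_nonneg {x : ℝ} (hx : 0 ≤ x) : cosh x ≤ exp x := by
  rw [cosh_eq]
  linarith [exp_le_exp.2 (show -x ≤ x by linarith)]

lemma self_add_exp_add_three_div_four_le_two_mul_cosh (t : ℝ) :
    t + (exp t + 3) / 4 ≤ 2 * cosh t := by
  set y := exp (t / 2)
  have hy : 0 < y := exp_pos _
  have ht : t ≤ 2 * (y - 1) := by linarith [add_one_le_exp (t / 2)]
  have hexp : exp t = y ^ 2 := by rw [← exp_nat_mul]; ring_nf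
  have hexp_neg : exp (-t) = (y ^ 2)⁻¹ := by rw [exp_neg, hexp]
  -- `3y⁴ - 8y³ + 5y² + 4 = 3 (y² - 4y/3 - 1/6)² + 2/3 (y - 1)² + 13/4`
  have hpoly : 0 ≤ 3 * y ^ 4 - 8 * y ^ 3 + 5 * y ^ 2 + 4 := by
    nlinarith [sq_nonneg (y ^ 2 - 4 * y / 3 - 1 / 6), sq_nonneg (y - 1)]
  have hkey : 2 * (y - 1) + (y ^ 2 + 3) / 4 ≤ y ^ 2 + (y ^ 2)⁻¹ := by
    rw [← sub_nonneg]
    have : y ^ 2 + (y ^ 2)⁻¹ - (2 * (y - 1) + (y ^ 2 + 3) / 4)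
        = (3 * y ^ 4 - 8 * y ^ 3 + 5 * y ^ 2 + 4) / (4 * y ^ 2) := by
      field_simp
      ring
    rw [this]
    positivity
  rw [cosh_eq, hexp, hexp_neg]
  linarith

lemma hasDerivAt_neg_exp_neg_mul_exp_div {b : ℝ} (hb : b ≠ 0) (t : ℝ) :
    HasDerivAt (fun t ↦ -exp (-b * exp t) / b) (exp (t - b * exp t)) t := by
  refine (((hasDerivAt_exp t).const_mul (-b)).exp.neg.div_const b).congr_deriv ?_
  rw [sub_eq_add_neg, exp_add]
  field_simp

lemma tendsto_neg_exp_neg_mul_exp_div_atTop {b : ℝ} (hb : 0 < b) :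
    Tendsto (fun t ↦ -exp (-b * exp t) / b) atTop (𝓝 0) := by
  have : Tendsto (fun t ↦ -b * exp t) atTop atBot :=
    tendsto_exp_atTop.const_mul_atTop_of_neg (neg_neg_of_pos hb)
  simpa using ((tendsto_exp_atBot.comp this).neg.div_const b)

lemma integrableOn_Ioi_exp_sub_mul_exp {b : ℝ} (hb : 0 < b) (c : ℝ) :
    IntegrableOn (fun t ↦ exp (t - b * exp t)) (Ioi c) :=
  integrableOn_Ioi_deriv_of_nonneg' (fun t _ ↦ hasDerivAt_neg_exp_neg_mul_exp_div hb.ne' t)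
    (fun _ _ ↦ (exp_pos _).le) (tendsto_neg_exp_neg_mul_exp_div_atTop hb)

lemma integral_Ioi_exp_sub_mul_exp {b : ℝ} (hb : 0 < b) (c : ℝ) :
    ∫ t in Ioi c, exp (t - b * exp t) = exp (-b * exp c) / b := by
  rw [integral_Ioi_of_hasDerivAt_of_nonneg'
    (fun t _ ↦ hasDerivAt_neg_exp_neg_mul_exp_div hb.ne' t)
    (fun _ _ ↦ (exp_pos _).le) (tendsto_neg_exp_neg_mul_exp_div_atTop hb)]
  ring

lemma exp_neg_mul_cosh_mul_cosh_mul_le {a r t : ℝ} (ha : 0 ≤ a) (hr : 0 ≤ r)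
    (hra : a ≤ 1 + r / 2) (ht : 0 ≤ t) :
    exp (-r * cosh t) * cosh (a * t) ≤ exp (-(3 * r / 8)) * exp (t - r / 8 * exp t) := by
  have hat : a * t ≤ (1 + r / 2) * t := mul_le_mul_of_nonneg_right hra ht
  have hcosh := mul_le_mul_of_nonneg_left (self_add_exp_add_three_div_four_le_two_mul_cosh t)
    (div_nonneg hr zero_le_two)
  calc exp (-r * cosh t) * cosh (a * t) ≤ exp (-r * cosh t) * exp (a * t) := by
        gcongr
        exact cosh_le_exp_of_nonneg (mul_nonneg ha ht)
    _ = exp (-r * cosh t + a * t) := (exp_add _ _).symm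
    _ ≤ exp (-(3 * r / 8) + (t - r / 8 * exp t)) := exp_le_exp.2 (by linarith)
    _ = exp (-(3 * r / 8)) * exp (t - r / 8 * exp t) := exp_add _ _

end Real

/-- Modified Bessel function bound: for `a ≥ 1` and `r > 0` with `r ≥ 2(a−1)`,
`K_a(r) = (1/2) ∫₀^∞ e^{−r cosh t} cosh(a t) dt ≤ (4/r) e^{−r/2}`. -/
theorem bessel_K_le (a r : ℝ) (ha : 1 ≤ a) (hr : 0 < r) (hra : 2 * (a - 1) ≤ r) :
    (1 / 2) * ∫ t in Set.Ioi (0 : ℝ), Real.exp (-r * Real.cosh t) * Real.cosh (a * t)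
      ≤ (4 / r) * Real.exp (-r / 2) := by
  have hr8 : 0 < r / 8 := by positivity
  have hmajorant : ∫ t in Ioi 0, exp (-r * cosh t) * cosh (a * t)
      ≤ ∫ t in Ioi 0, exp (-(3 * r / 8)) * exp (t - r / 8 * exp t) := by
    refine integral_mono_of_nonneg (.of_forall fun t ↦ by positivity)
      ((integrableOn_Ioi_exp_sub_mul_exp hr8 0).const_mul _) ?_
    filter_upwards [ae_restrict_mem measurableSet_Ioi] with t ht
    exact exp_neg_mul_cosh_mul_cosh_mul_le (by linarith) hr.le (by linarith) (le_of_lt ht)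
  calc (1 / 2) * ∫ t in Ioi 0, exp (-r * cosh t) * cosh (a * t)
      ≤ (1 / 2) * ∫ t in Ioi 0, exp (-(3 * r / 8)) * exp (t - r / 8 * exp t) := by gcongr
    _ = (4 / r) * (exp (-(3 * r / 8)) * exp (-(r / 8))) := by
      rw [integral_const_mul, integral_Ioi_exp_sub_mul_exp hr8, exp_zero]
      field_simp
      ring_nf
    _ = (4 / r) * exp (-r / 2) := by rw [← exp_add]; ring_nf
end

section
/- For every integer m ≥ 1 and every real δ ∈ (0, 1]: Σ_{j=1}^m 4^j · log(4m/(2^j δ)) ≤ (4/3) · 4^m · log(6m/(2^m δ)). -/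
/-!
Writing `t = m / δ ≥ 1`, the `j`-th summand is `4 ^ j * (log 4 + log t - j * log 2)`, so both sides
are explicit combinations of `log t`, `log 2` and `log 3` once the sums `∑ 4 ^ j` and `∑ j * 4 ^ j`
are evaluated. The gap between the two sides is then exactly
`(4 / 3) * log t + (4 / 9) * (4 ^ m * (3 * log 3 - 4 * log 2) + 7 * log 2)`,
which is nonnegative because `t ≥ 1` and `16 ≤ 27`.
-/

open Real Finset

lemma sum_Icc_one_four_pow (m : ℕ) :
    ∑ j ∈ Icc 1 m, (4 : ℝ) ^ j = ((4 : ℝ) ^ (m + 1) - 4) / 3 := by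
  induction m with
  | zero => simp
  | succ n ih =>
    rw [sum_Icc_succ_top (by omega), ih]
    ring

lemma sum_Icc_one_mul_four_pow (m : ℕ) :
    ∑ j ∈ Icc 1 m, (j : ℝ) * (4 : ℝ) ^ j = (4 + (3 * (m : ℝ) - 1) * 4 ^ (m + 1)) / 9 := by
  induction m with
  | zero => norm_num
  | succ n ih =>
    rw [sum_Icc_succ_top (by omega), ih]
    push_cast
    ring

lemma log_mul_div_two_pow {c t : ℝ} (hc : 0 < c) (ht : 0 < t) (j : ℕ) :
    log (c * t / 2 ^ j) = log c + log t - j * log 2 := by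
  rw [log_div (by positivity) (by positivity), log_mul hc.ne' ht.ne', log_pow]

lemma four_mul_log_two_le_three_mul_log_three : 4 * log 2 ≤ 3 * log 3 := by
  have h := log_le_log (by norm_num : (0 : ℝ) < 2 ^ 4) (by norm_num : (2 : ℝ) ^ 4 ≤ 3 ^ 3)
  simpa only [log_pow, Nat.cast_ofNat] using h

lemma sub_sum_four_pow_mul_log_div_two_pow {t : ℝ} (ht : 0 < t) (m : ℕ) :
    4 / 3 * 4 ^ m * log (6 * t / 2 ^ m) - ∑ j ∈ Icc 1 m, (4 : ℝ) ^ j * log (4 * t / 2 ^ j)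
      = 4 / 3 * log t + 4 / 9 * (4 ^ m * (3 * log 3 - 4 * log 2) + 7 * log 2) := by
  have summand : ∀ j ∈ Icc 1 m, (4 : ℝ) ^ j * log (4 * t / 2 ^ j)
      = 4 ^ j * (log 4 + log t) - (j * 4 ^ j) * log 2 := fun j _ => by
    rw [log_mul_div_two_pow (by norm_num) ht]
    ring
  have log_four : log 4 = 2 * log 2 := by
    rw [show (4 : ℝ) = 2 ^ 2 by norm_num, log_pow]
    norm_num
  have log_six : log 6 = log 2 + log 3 := by
    rw [show (6 : ℝ) = 2 * 3 by norm_num, log_mul (by norm_num) (by norm_num)]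
  rw [sum_congr rfl summand, sum_sub_distrib, ← sum_mul, ← sum_mul, sum_Icc_one_four_pow,
    sum_Icc_one_mul_four_pow, log_mul_div_two_pow (by norm_num) ht, log_four, log_six]
  ring

lemma sum_four_pow_mul_log_div_two_pow_le {t : ℝ} (ht : 1 ≤ t) (m : ℕ) :
    ∑ j ∈ Icc 1 m, (4 : ℝ) ^ j * log (4 * t / 2 ^ j) ≤ 4 / 3 * 4 ^ m * log (6 * t / 2 ^ m) := by
  have gap := sub_sum_four_pow_mul_log_div_two_pow (zero_lt_one.trans_le ht) m
  have cross : 0 ≤ (4 : ℝ) ^ m * (3 * log 3 - 4 * log 2) :=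
    mul_nonneg (by positivity) (by linarith [four_mul_log_two_le_three_mul_log_three])
  linarith [log_nonneg ht, log_pos one_lt_two]

/-- Finite-sum inequality from the repeated kernel halving analysis:
for every integer `m ≥ 1` and real `δ ∈ (0,1]`,
`Σ_{j=1}^m 4^j log(4m/(2^j δ)) ≤ (4/3) 4^m log(6m/(2^m δ))`. -/
theorem sum_four_pow_log_le (m : ℕ) (hm : 1 ≤ m) (δ : ℝ) (hδ0 : 0 < δ) (hδ1 : δ ≤ 1) :
    ∑ j ∈ Finset.Icc 1 m, (4 : ℝ) ^ j * Real.log (4 * (m : ℝ) / ((2 : ℝ) ^ j * δ))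
      ≤ (4 / 3) * (4 : ℝ) ^ m * Real.log (6 * (m : ℝ) / ((2 : ℝ) ^ m * δ)) := by
  have ht : 1 ≤ (m : ℝ) / δ := (one_le_div hδ0).2 (hδ1.trans (by exact_mod_cast hm))
  have reassoc : ∀ (c : ℝ) (j : ℕ), c * m / (2 ^ j * δ) = c * (m / δ) / 2 ^ j := fun c j => by
    ring
  simpa only [reassoc] using sum_four_pow_mul_log_div_two_pow_le ht m
end
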